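/- Let μ and ν be probability measures on ℝ with finite second moments and CDFs F, G. For every coupling (X, Y) of μ and ν, E[|X − Y|²] ≥ ∫₀¹ |F⁻¹(t) − G⁻¹(t)|² dt. Consequently the squared L²-Wasserstein distance between μ and ν equals ∫₀¹ |F⁻¹(t) − G⁻¹(t)|² dt. -/

import Mathlib

open MeasureTheory Set Filter ProbabilityTheory

/-!
For a coupling `π` of `μ` and `ν`, `∫ (x - y)² dπ = ∫ x² dμ + ∫ y² dν - 2 ∫ x y dπ`, so it suffices
to show that the comonotone coupling, the law of `(F⁻¹(U), G⁻¹(U))` with `U` uniform, maximises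
`∫ x y dπ`. Hoeffding's formula writes `x y = ∬ s(x, u) s(y, v) du dv` with
`s(a, u) = 1{u < a} - 1{u < 0}`; after Fubini the integrand depends on `π` beyond its marginals
only through `π((u, ∞) × (v, ∞))`. This is at most `min (μ (u, ∞)) (ν (v, ∞))` (Fréchet), and the
comonotone coupling attains the bound since `u < F⁻¹(t) ↔ F(u) < t`.
-/

theorem StieltjesFunction.sInf_le_iff (f : StieltjesFunction ℝ) {t : ℝ}
    (hbot : ∃ y, f y < t) (htop : ∃ y, t ≤ f y) (x : ℝ) :
    sInf {y | t ≤ f y} ≤ x ↔ t ≤ f x := by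
  have hbdd : BddBelow {y | t ≤ f y} := by
    obtain ⟨y₀, hy₀⟩ := hbot
    exact ⟨y₀, fun y hy => le_of_lt (f.mono.reflect_lt (hy₀.trans_le hy))⟩
  -- right continuity puts the infimum itself in the set
  have hmem : t ≤ f (sInf {y | t ≤ f y}) := by
    refine ge_of_tendsto ((f.right_continuous _).mono_left
      (nhdsWithin_mono _ Ioi_subset_Ici_self)) (eventually_nhdsWithin_of_forall fun y hy => ?_)
    obtain ⟨s, hs, hsy⟩ := exists_lt_of_csInf_lt htop hy
    exact le_trans (show t ≤ f s from hs) (f.mono hsy.le)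
  exact ⟨fun h => hmem.trans (f.mono h), fun h => csInf_le hbdd h⟩

theorem measure_Ioi_eq_ofReal_one_sub_cdf (μ : Measure ℝ) [IsProbabilityMeasure μ] (x : ℝ) :
    μ (Ioi x) = ENNReal.ofReal (1 - cdf μ x) := by
  rw [← compl_Iic, prob_compl_eq_one_sub measurableSet_Iic, ← ofReal_cdf,
    ENNReal.ofReal_sub _ (cdf_nonneg μ x), ENNReal.ofReal_one]

/-- The Galois connection `Q t ≤ x ↔ t ≤ F x` on `(0, 1)` characterises the generalized
inverse `F⁻¹ t = inf {x | t ≤ F x}` of the CDF `F` of `μ`. -/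
def IsQuantileFunction (μ : Measure ℝ) (Q : ℝ → ℝ) : Prop :=
  ∀ t ∈ Ioo (0 : ℝ) 1, ∀ x, Q t ≤ x ↔ t ≤ cdf μ x

/-- The law of `(F⁻¹(U), G⁻¹(U))` for `U` uniform on `(0, 1)`. -/
noncomputable def comonotoneCoupling (Q₁ Q₂ : ℝ → ℝ) : Measure (ℝ × ℝ) :=
  (volume.restrict (Ioo 0 1)).map fun t => (Q₁ t, Q₂ t)

namespace IsQuantileFunction

variable {μ ν : Measure ℝ} {Q Q₁ Q₂ : ℝ → ℝ}

theorem of_eq_sInf [IsProbabilityMeasure μ]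
    (hQ : ∀ t ∈ Ioo (0 : ℝ) 1, Q t = sInf {x | t ≤ cdf μ x}) : IsQuantileFunction μ Q := by
  intro t ht x
  rw [hQ t ht]
  exact (cdf μ).sInf_le_iff ((tendsto_cdf_atBot μ).eventually_lt_const ht.1).exists
    (((tendsto_cdf_atTop μ).eventually_const_lt ht.2).exists.imp fun _ => le_of_lt) x

theorem lt_iff (hQ : IsQuantileFunction μ Q) {t : ℝ} (ht : t ∈ Ioo (0 : ℝ) 1) (x : ℝ) :
    x < Q t ↔ cdf μ x < t := by
  simpa only [not_le] using (hQ t ht x).not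

theorem monotoneOn (hQ : IsQuantileFunction μ Q) : MonotoneOn Q (Ioo 0 1) :=
  fun s hs t ht hst => (hQ s hs _).2 (hst.trans ((hQ t ht _).1 le_rfl))

theorem aemeasurable (hQ : IsQuantileFunction μ Q) :
    AEMeasurable Q (volume.restrict (Ioo 0 1)) :=
  aemeasurable_restrict_of_monotoneOn measurableSet_Ioo hQ.monotoneOn

theorem map_volume [IsProbabilityMeasure μ] (hQ : IsQuantileFunction μ Q) :
    (volume.restrict (Ioo 0 1)).map Q = μ := by
  have : IsProbabilityMeasure (volume.restrict (Ioo (0 : ℝ) 1)) := ⟨by simp⟩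
  have := Measure.isProbabilityMeasure_map (μ := volume.restrict (Ioo (0 : ℝ) 1)) hQ.aemeasurable
  refine (Measure.ext_of_Iic _ _ fun x => ?_)
  have hpre : Q ⁻¹' Iic x ∩ Ioo 0 1 = Ioc 0 (cdf μ x) ∩ Ioo 0 1 := by
    ext t
    simp only [mem_inter_iff, mem_preimage, mem_Iic, mem_Ioc, and_congr_left_iff]
    exact fun ht => (hQ t ht x).trans ⟨fun h => ⟨ht.1, h⟩, And.right⟩
  rw [Measure.map_apply_of_aemeasurable hQ.aemeasurable measurableSet_Iic,
    Measure.restrict_apply' measurableSet_Ioo, hpre, ← ofReal_cdf]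
  rcases (cdf_le_one μ x).lt_or_eq with h | h
  · rw [inter_eq_left.2 (Ioc_subset_Ioo_right h), Real.volume_Ioc, sub_zero]
  · rw [h, inter_eq_right.2 Ioo_subset_Ioc_self, Real.volume_Ioo, sub_zero]

theorem map_fst_comonotoneCoupling [IsProbabilityMeasure μ] (hQ₁ : IsQuantileFunction μ Q₁)
    (hQ₂ : IsQuantileFunction ν Q₂) : (comonotoneCoupling Q₁ Q₂).map Prod.fst = μ := by
  rw [comonotoneCoupling, AEMeasurable.map_map_of_aemeasurable measurable_fst.aemeasurable
    (hQ₁.aemeasurable.prodMk hQ₂.aemeasurable)]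
  exact hQ₁.map_volume

theorem map_snd_comonotoneCoupling [IsProbabilityMeasure ν] (hQ₁ : IsQuantileFunction μ Q₁)
    (hQ₂ : IsQuantileFunction ν Q₂) : (comonotoneCoupling Q₁ Q₂).map Prod.snd = ν := by
  rw [comonotoneCoupling, AEMeasurable.map_map_of_aemeasurable measurable_snd.aemeasurable
    (hQ₁.aemeasurable.prodMk hQ₂.aemeasurable)]
  exact hQ₂.map_volume

theorem comonotoneCoupling_Ioi_prod_Ioi [IsProbabilityMeasure μ] [IsProbabilityMeasure ν]
    (hQ₁ : IsQuantileFunction μ Q₁) (hQ₂ : IsQuantileFunction ν Q₂) (u v : ℝ) :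
    comonotoneCoupling Q₁ Q₂ (Ioi u ×ˢ Ioi v) = min (μ (Ioi u)) (ν (Ioi v)) := by
  have hpre : (fun t => (Q₁ t, Q₂ t)) ⁻¹' (Ioi u ×ˢ Ioi v) ∩ Ioo 0 1 =
      Ioo (max (cdf μ u) (cdf ν v)) 1 := by
    ext t
    simp only [mem_inter_iff, mem_preimage, mem_prod, mem_Ioi, mem_Ioo, max_lt_iff]
    constructor
    · rintro ⟨⟨hu, hv⟩, ht⟩
      exact ⟨⟨(hQ₁.lt_iff ht u).1 hu, (hQ₂.lt_iff ht v).1 hv⟩, ht.2⟩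
    · rintro ⟨⟨hu, hv⟩, ht⟩
      have ht' : t ∈ Ioo (0 : ℝ) 1 := ⟨(cdf_nonneg μ u).trans_lt hu, ht⟩
      exact ⟨⟨(hQ₁.lt_iff ht' u).2 hu, (hQ₂.lt_iff ht' v).2 hv⟩, ht'⟩
  rw [comonotoneCoupling, Measure.map_apply_of_aemeasurable
      (hQ₁.aemeasurable.prodMk hQ₂.aemeasurable) (measurableSet_Ioi.prod measurableSet_Ioi),
    Measure.restrict_apply' measurableSet_Ioo, hpre, Real.volume_Ioo,
    measure_Ioi_eq_ofReal_one_sub_cdf, measure_Ioi_eq_ofReal_one_sub_cdf,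
    ← ENNReal.ofReal_min, sub_sup]

theorem integral_comonotoneCoupling (hQ₁ : IsQuantileFunction μ Q₁)
    (hQ₂ : IsQuantileFunction ν Q₂) :
    ∫ z, (z.1 - z.2) ^ 2 ∂comonotoneCoupling Q₁ Q₂ = ∫ t in (0 : ℝ)..1, (Q₁ t - Q₂ t) ^ 2 := by
  rw [comonotoneCoupling, integral_map (hQ₁.aemeasurable.prodMk hQ₂.aemeasurable)
      (by fun_prop), intervalIntegral.integral_of_le zero_le_one, integral_Ioc_eq_integral_Ioo]

end IsQuantileFunction

theorem measure_prod_le_min_of_map_eq {π : Measure (ℝ × ℝ)} {μ ν : Measure ℝ}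
    (h₁ : π.map Prod.fst = μ) (h₂ : π.map Prod.snd = ν) {s t : Set ℝ} (hs : MeasurableSet s)
    (ht : MeasurableSet t) : π (s ×ˢ t) ≤ min (μ s) (ν t) := by
  rw [← h₁, ← h₂, Measure.map_apply measurable_fst hs, Measure.map_apply measurable_snd ht]
  exact le_min (measure_mono (prod_subset_preimage_fst s t))
    (measure_mono (prod_subset_preimage_snd s t))

noncomputable def signedStep (a u : ℝ) : ℝ := (Iio a).indicator 1 u - (Iio 0).indicator 1 u

theorem signedStep_eq (a u : ℝ) :
    signedStep a u = (Ico 0 a).indicator 1 u - (Ico a 0).indicator 1 u := by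
  simp only [signedStep, indicator_apply, mem_Iio, mem_Ico, Pi.one_apply]
  split_ifs <;> simp_all <;> linarith

theorem abs_signedStep (a u : ℝ) :
    |signedStep a u| = (Ico 0 a).indicator 1 u + (Ico a 0).indicator 1 u := by
  simp only [signedStep_eq, indicator_apply, mem_Ico, Pi.one_apply]
  split_ifs <;> grind

theorem abs_signedStep_le_one (a u : ℝ) : |signedStep a u| ≤ 1 := by
  simp only [signedStep, indicator_apply, Pi.one_apply]
  split_ifs <;> norm_num

theorem integrable_indicator_one_Ico (a b : ℝ) :
    Integrable ((Ico a b).indicator (1 : ℝ → ℝ)) :=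
  (integrable_indicator_iff measurableSet_Ico).2 (integrableOn_const measure_Ico_lt_top.ne)

theorem integrable_signedStep (a : ℝ) : Integrable (signedStep a) := by
  refine ((integrable_indicator_one_Ico 0 a).sub (integrable_indicator_one_Ico a 0)).congr ?_
  exact ae_of_all _ fun u => (signedStep_eq a u).symm

theorem integral_signedStep (a : ℝ) : ∫ u, signedStep a u = a := by
  simp_rw [signedStep_eq]
  rw [integral_sub (integrable_indicator_one_Ico 0 a) (integrable_indicator_one_Ico a 0),
    integral_indicator_one measurableSet_Ico, integral_indicator_one measurableSet_Ico,
    Real.volume_real_Ico, Real.volume_real_Ico]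
  rcases le_total a 0 with h | h <;> simp [h]

theorem integral_abs_signedStep (a : ℝ) : ∫ u, |signedStep a u| = |a| := by
  simp_rw [abs_signedStep]
  rw [integral_add (integrable_indicator_one_Ico 0 a) (integrable_indicator_one_Ico a 0),
    integral_indicator_one measurableSet_Ico, integral_indicator_one measurableSet_Ico,
    Real.volume_real_Ico, Real.volume_real_Ico]
  rcases le_total a 0 with h | h <;> simp [h, abs_of_nonneg, abs_of_nonpos]

theorem measurable_signedStep_uncurry : Measurable (Function.uncurry signedStep) := by
  have h : Function.uncurry signedStep = fun p : ℝ × ℝ =>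
      {p : ℝ × ℝ | p.2 < p.1}.indicator 1 p - {p : ℝ × ℝ | p.2 < 0}.indicator 1 p := by
    ext ⟨a, u⟩; simp [signedStep, indicator_apply]
  rw [h]
  exact (measurable_const.indicator (measurableSet_lt measurable_snd measurable_fst)).sub
    (measurable_const.indicator (measurableSet_lt measurable_snd measurable_const))

theorem mul_eq_integral_signedStep (a b : ℝ) :
    a * b = ∫ w : ℝ × ℝ, signedStep a w.1 * signedStep b w.2 := by
  rw [Measure.volume_eq_prod, integral_prod_mul, integral_signedStep, integral_signedStep]

section Hoeffding

variable {π : Measure (ℝ × ℝ)}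

theorem integrable_signedStep_mul_signedStep [SFinite π]
    (h : Integrable (fun z : ℝ × ℝ => z.1 * z.2) π) :
    Integrable (fun q : (ℝ × ℝ) × (ℝ × ℝ) => signedStep q.1.1 q.2.1 * signedStep q.1.2 q.2.2)
      (π.prod volume) := by
  have hmeas : Measurable fun q : (ℝ × ℝ) × (ℝ × ℝ) =>
      signedStep q.1.1 q.2.1 * signedStep q.1.2 q.2.2 :=
    (measurable_signedStep_uncurry.comp (by fun_prop : Measurable fun q :
      (ℝ × ℝ) × (ℝ × ℝ) => (q.1.1, q.2.1))).mul
      (measurable_signedStep_uncurry.comp (by fun_prop : Measurable fun q :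
      (ℝ × ℝ) × (ℝ × ℝ) => (q.1.2, q.2.2)))
  rw [integrable_prod_iff hmeas.aestronglyMeasurable]
  refine ⟨ae_of_all _ fun z => ?_, ?_⟩
  · rw [Measure.volume_eq_prod]
    exact (integrable_signedStep z.1).mul_prod (integrable_signedStep z.2)
  · refine h.norm.congr (ae_of_all _ fun z => ?_)
    simp_rw [norm_mul, Real.norm_eq_abs]
    rw [Measure.volume_eq_prod, integral_prod_mul (fun u => |signedStep z.1 u|)
      (fun v => |signedStep z.2 v|), integral_abs_signedStep, integral_abs_signedStep]

theorem integral_mul_eq_integral_integral_signedStep [SFinite π]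
    (h : Integrable (fun z : ℝ × ℝ => z.1 * z.2) π) :
    ∫ z, z.1 * z.2 ∂π = ∫ w : ℝ × ℝ, ∫ z, signedStep z.1 w.1 * signedStep z.2 w.2 ∂π := by
  simp_rw [mul_eq_integral_signedStep _ (Prod.snd _)]
  exact integral_integral_swap (integrable_signedStep_mul_signedStep h)

theorem integral_signedStep_mul_signedStep [IsFiniteMeasure π] (u v : ℝ) :
    ∫ z, signedStep z.1 u * signedStep z.2 v ∂π =
      π.real (Ioi u ×ˢ Ioi v) - ∫ x, (Iio 0).indicator 1 v * signedStep x u ∂(π.map Prod.fst)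
        - ∫ y, (Iio 0).indicator 1 u * (Ioi v).indicator 1 y ∂(π.map Prod.snd) := by
  set c : ℝ := (Iio 0).indicator 1 u
  set d : ℝ := (Iio 0).indicator 1 v
  have hsplit : ∀ z : ℝ × ℝ, signedStep z.1 u * signedStep z.2 v =
      (Ioi u ×ˢ Ioi v).indicator 1 z - d * signedStep z.1 u - c * (Ioi v).indicator 1 z.2 := by
    intro z
    simp only [signedStep, c, d, indicator_apply, mem_prod, mem_Iio, mem_Ioi, Pi.one_apply]
    split_ifs <;> simp_all
  have hstep : Measurable fun x => signedStep x u :=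
    measurable_signedStep_uncurry.comp (measurable_id.prodMk measurable_const)
  have hA : Integrable (fun z => (Ioi u ×ˢ Ioi v).indicator (1 : ℝ × ℝ → ℝ) z) π :=
    (integrable_const 1).indicator (measurableSet_Ioi.prod measurableSet_Ioi)
  have hB : Integrable (fun z : ℝ × ℝ => d * signedStep z.1 u) π :=
    (Integrable.of_bound (hstep.comp measurable_fst).aestronglyMeasurable 1
      (ae_of_all _ fun z => (abs_signedStep_le_one z.1 u))).const_mul d
  have hC : Integrable (fun z : ℝ × ℝ => c * (Ioi v).indicator 1 z.2) π :=
    (((integrable_const 1).indicator measurableSet_Ioi).comp_measurable measurable_snd).const_mul c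
  simp_rw [hsplit]
  rw [integral_sub (f := fun z => (Ioi u ×ˢ Ioi v).indicator 1 z - d * signedStep z.1 u)
      (hA.sub hB) hC, integral_sub hA hB, integral_indicator_one
      (measurableSet_Ioi.prod measurableSet_Ioi),
    integral_map measurable_fst.aemeasurable (hstep.const_mul d).aestronglyMeasurable,
    integral_map (f := fun y => c * (Ioi v).indicator 1 y) measurable_snd.aemeasurable
      ((measurable_const.indicator measurableSet_Ioi).const_mul c).aestronglyMeasurable]

end Hoeffding

section Coupling

variable {π π' : Measure (ℝ × ℝ)}

theorem integral_mul_le_of_measure_Ioi_prod_Ioi_le [IsFiniteMeasure π] [IsFiniteMeasure π']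
    (hfst : π.map Prod.fst = π'.map Prod.fst) (hsnd : π.map Prod.snd = π'.map Prod.snd)
    (h : Integrable (fun z : ℝ × ℝ => z.1 * z.2) π)
    (h' : Integrable (fun z : ℝ × ℝ => z.1 * z.2) π')
    (hle : ∀ u v, π (Ioi u ×ˢ Ioi v) ≤ π' (Ioi u ×ˢ Ioi v)) :
    ∫ z, z.1 * z.2 ∂π ≤ ∫ z, z.1 * z.2 ∂π' := by
  rw [integral_mul_eq_integral_integral_signedStep h,
    integral_mul_eq_integral_integral_signedStep h']
  refine integral_mono (integrable_signedStep_mul_signedStep h).integral_prod_right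
    (integrable_signedStep_mul_signedStep h').integral_prod_right fun w => ?_
  simp only [integral_signedStep_mul_signedStep, hfst, hsnd, sub_eq_add_neg, add_assoc]
  gcongr
  exact ENNReal.toReal_mono (measure_ne_top _ _) (hle _ _)

theorem integrable_fst_mul_snd (h₁ : Integrable (fun x : ℝ => x ^ 2) (π.map Prod.fst))
    (h₂ : Integrable (fun y : ℝ => y ^ 2) (π.map Prod.snd)) :
    Integrable (fun z : ℝ × ℝ => z.1 * z.2) π :=
  ((memLp_two_iff_integrable_sq aestronglyMeasurable_id).2 h₁ |>.comp_of_map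
    measurable_fst.aemeasurable).integrable_mul
    ((memLp_two_iff_integrable_sq aestronglyMeasurable_id).2 h₂ |>.comp_of_map
    measurable_snd.aemeasurable)

theorem integral_sub_sq_eq (h₁ : Integrable (fun x : ℝ => x ^ 2) (π.map Prod.fst))
    (h₂ : Integrable (fun y : ℝ => y ^ 2) (π.map Prod.snd)) :
    ∫ z, (z.1 - z.2) ^ 2 ∂π =
      ∫ x, x ^ 2 ∂(π.map Prod.fst) + ∫ y, y ^ 2 ∂(π.map Prod.snd) - 2 * ∫ z, z.1 * z.2 ∂π := by
  have h₁' : Integrable (fun z : ℝ × ℝ => z.1 ^ 2) π :=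
    (integrable_map_measure (by fun_prop) measurable_fst.aemeasurable).1 h₁
  have h₂' : Integrable (fun z : ℝ × ℝ => z.2 ^ 2) π :=
    (integrable_map_measure (by fun_prop) measurable_snd.aemeasurable).1 h₂
  simp_rw [sub_sq', mul_assoc]
  rw [integral_sub (f := fun z : ℝ × ℝ => z.1 ^ 2 + z.2 ^ 2) (h₁'.add h₂')
      ((integrable_fst_mul_snd h₁ h₂).const_mul 2),
    integral_add h₁' h₂', integral_const_mul,
    integral_map measurable_fst.aemeasurable (by fun_prop),
    integral_map measurable_snd.aemeasurable (by fun_prop)]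

theorem integral_sub_sq_le_of_measure_Ioi_prod_Ioi_le [IsFiniteMeasure π] [IsFiniteMeasure π']
    (hfst : π.map Prod.fst = π'.map Prod.fst) (hsnd : π.map Prod.snd = π'.map Prod.snd)
    (h₁ : Integrable (fun x : ℝ => x ^ 2) (π.map Prod.fst))
    (h₂ : Integrable (fun y : ℝ => y ^ 2) (π.map Prod.snd))
    (hle : ∀ u v, π (Ioi u ×ˢ Ioi v) ≤ π' (Ioi u ×ˢ Ioi v)) :
    ∫ z, (z.1 - z.2) ^ 2 ∂π' ≤ ∫ z, (z.1 - z.2) ^ 2 ∂π := by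
  have h₁' : Integrable (fun x : ℝ => x ^ 2) (π'.map Prod.fst) := hfst ▸ h₁
  have h₂' : Integrable (fun y : ℝ => y ^ 2) (π'.map Prod.snd) := hsnd ▸ h₂
  rw [integral_sub_sq_eq h₁ h₂, integral_sub_sq_eq h₁' h₂', hfst, hsnd]
  have := integral_mul_le_of_measure_Ioi_prod_Ioi_le hfst hsnd (integrable_fst_mul_snd h₁ h₂)
    (integrable_fst_mul_snd h₁' h₂') hle
  linarith

end Coupling

theorem IsQuantileFunction.integral_le_integral_sub_sq {μ ν : Measure ℝ} [IsProbabilityMeasure μ]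
    [IsProbabilityMeasure ν] {Q₁ Q₂ : ℝ → ℝ} (hQ₁ : IsQuantileFunction μ Q₁)
    (hQ₂ : IsQuantileFunction ν Q₂) (hμ : Integrable (fun x : ℝ => x ^ 2) μ)
    (hν : Integrable (fun y : ℝ => y ^ 2) ν) {π : Measure (ℝ × ℝ)} (h₁ : π.map Prod.fst = μ)
    (h₂ : π.map Prod.snd = ν) :
    ∫ t in (0 : ℝ)..1, (Q₁ t - Q₂ t) ^ 2 ≤ ∫ z, (z.1 - z.2) ^ 2 ∂π := by
  have h₀₁ := hQ₁.map_fst_comonotoneCoupling hQ₂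
  have h₀₂ := hQ₁.map_snd_comonotoneCoupling hQ₂
  have : IsProbabilityMeasure π :=
    have : IsProbabilityMeasure (π.map Prod.fst) := h₁ ▸ inferInstance
    Measure.isProbabilityMeasure_of_map Prod.fst
  have : IsProbabilityMeasure (comonotoneCoupling Q₁ Q₂) :=
    have : IsProbabilityMeasure ((comonotoneCoupling Q₁ Q₂).map Prod.fst) := h₀₁ ▸ inferInstance
    Measure.isProbabilityMeasure_of_map Prod.fst
  rw [← hQ₁.integral_comonotoneCoupling hQ₂]
  refine integral_sub_sq_le_of_measure_Ioi_prod_Ioi_le (h₁.trans h₀₁.symm) (h₂.trans h₀₂.symm)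
    (h₁ ▸ hμ) (h₂ ▸ hν) fun u v => ?_
  rw [hQ₁.comonotoneCoupling_Ioi_prod_Ioi hQ₂]
  exact measure_prod_le_min_of_map_eq h₁ h₂ measurableSet_Ioi measurableSet_Ioi

theorem stmt_1 (μ ν : Measure ℝ) [IsProbabilityMeasure μ] [IsProbabilityMeasure ν]
    (hμ2 : Integrable (fun x : ℝ => x ^ 2) μ) (hν2 : Integrable (fun x : ℝ => x ^ 2) ν)
    (F G : ℝ → ℝ)
    (hF : ∀ x, F x = (μ (Iic x)).toReal) (hG : ∀ x, G x = (ν (Iic x)).toReal)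
    (Finv Ginv : ℝ → ℝ)
    (hFinv : ∀ t ∈ Ioo (0 : ℝ) 1, Finv t = sInf {x : ℝ | t ≤ F x})
    (hGinv : ∀ t ∈ Ioo (0 : ℝ) 1, Ginv t = sInf {x : ℝ | t ≤ G x}) :
    (∀ (Ω : Type) (_ : MeasurableSpace Ω) (P : Measure Ω), IsProbabilityMeasure P →
      ∀ (X Y : Ω → ℝ), AEMeasurable X P → AEMeasurable Y P →
        P.map X = μ → P.map Y = ν → Integrable (fun ω => (X ω - Y ω) ^ 2) P →
        ∫ ω, (X ω - Y ω) ^ 2 ∂P ≥ ∫ t in (0 : ℝ)..1, (Finv t - Ginv t) ^ 2) ∧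
    sInf {c : ℝ | ∃ π : Measure (ℝ × ℝ),
        π.map Prod.fst = μ ∧ π.map Prod.snd = ν ∧ c = ∫ z, (z.1 - z.2) ^ 2 ∂π} =
      ∫ t in (0 : ℝ)..1, (Finv t - Ginv t) ^ 2 := by
  have hFμ : F = cdf μ := funext fun x => by rw [hF, cdf_eq_real, measureReal_def]
  have hGν : G = cdf ν := funext fun x => by rw [hG, cdf_eq_real, measureReal_def]
  have hQ₁ : IsQuantileFunction μ Finv := .of_eq_sInf (hFμ ▸ hFinv)
  have hQ₂ : IsQuantileFunction ν Ginv := .of_eq_sInf (hGν ▸ hGinv)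
  have hlower (π : Measure (ℝ × ℝ)) := hQ₁.integral_le_integral_sub_sq hQ₂ hμ2 hν2 (π := π)
  refine ⟨fun Ω _ P _ X Y hX hY hXμ hYν _ => ?_, ?_⟩
  · have hXY := hX.prodMk hY
    rw [ge_iff_le, ← integral_map (f := fun z : ℝ × ℝ => (z.1 - z.2) ^ 2) hXY (by fun_prop)]
    refine hlower _ ?_ ?_
    · rwa [AEMeasurable.map_map_of_aemeasurable measurable_fst.aemeasurable hXY]
    · rwa [AEMeasurable.map_map_of_aemeasurable measurable_snd.aemeasurable hXY]
  · refine IsLeast.csInf_eq ⟨⟨comonotoneCoupling Finv Ginv, hQ₁.map_fst_comonotoneCoupling hQ₂,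
      hQ₁.map_snd_comonotoneCoupling hQ₂, (hQ₁.integral_comonotoneCoupling hQ₂).symm⟩, ?_⟩
    rintro _ ⟨π, h₁, h₂, rfl⟩
    exact hlower π h₁ h₂
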